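/- arXiv:2108.13286 — 2 statements merged into one kernel-verified Lean document; each statement's English description precedes it below -/
import Mathlib

section
/- Suppose W is a positive random variable with Gamma(α, θ) distribution (shape α, scale θ) and define V on the event corresponding to RR = exp(W) > 1 by V = RR + √(RR(RR−1)). Then the density of V on (1, ∞) is f_V(v) = (β_V^α/Γ(α)) · exp(−β_V log(v²/(2v−1))) · (log(v²/(2v−1)))^{α−1} · (1/v − 1/(v(2v−1))), where β_V = 1/θ. -/
open MeasureTheory ProbabilityTheory Set

/-- If `W ~ Gamma(α, scale θ)` (so rate `β_V = 1/θ`) and, with `RR = exp W`,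
`V = RR + √(RR(RR−1))` on the event `{RR > 1}`, then on `(1, ∞)` the density of `V` is
`f_V(v) = (β_V^α/Γ(α))·exp(−β_V log(v²/(2v−1)))·(log(v²/(2v−1)))^{α−1}·(1/v − 1/(v(2v−1)))`. -/
theorem evalue_density_gamma_gt_one {Ω : Type*} [MeasurableSpace Ω]
    (P : Measure Ω) [IsProbabilityMeasure P] (W : Ω → ℝ) (hWm : Measurable W)
    (α θ : ℝ) (hα : 0 < α) (hθ : 0 < θ)
    (hW : P.map W = gammaMeasure α (1 / θ))
    (RR : Ω → ℝ) (hRR : RR = fun ω => Real.exp (W ω))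
    (V : Ω → ℝ) (hV : V = fun ω => RR ω + Real.sqrt (RR ω * (RR ω - 1)))
    (βV : ℝ) (hβV : βV = 1 / θ) :
    ∀ s : Set ℝ, MeasurableSet s → s ⊆ Ioi 1 →
      P {ω | 1 < RR ω ∧ V ω ∈ s}
        = ENNReal.ofReal (∫ v in s,
            (βV ^ α / Real.Gamma α)
              * Real.exp (-βV * Real.log (v ^ 2 / (2 * v - 1)))
              * (Real.log (v ^ 2 / (2 * v - 1))) ^ (α - 1)
              * (1 / v - 1 / (v * (2 * v - 1)))) := by
  intro s hs hs1
  have hβVpos : 0 < βV := by rw [hβV]; positivity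
  subst hβV
  set φ : ℝ → ℝ := fun v => Real.log (v ^ 2 / (2 * v - 1)) with hφ
  set g : ℝ → ℝ := fun w => Real.exp w + Real.sqrt (Real.exp w * (Real.exp w - 1)) with hg
  -- g is a left inverse of φ on (1, ∞)
  have hgφ : ∀ v : ℝ, 1 < v → g (φ v) = v := by
    intro v hv
    have hd : (0:ℝ) < 2 * v - 1 := by linarith
    have hv0 : (0:ℝ) < v := by linarith
    have hr : Real.exp (φ v) = v ^ 2 / (2 * v - 1) := Real.exp_log (by positivity)
    have hsq : Real.exp (φ v) * (Real.exp (φ v) - 1) = (v * (v - 1) / (2 * v - 1)) ^ 2 := by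
      rw [hr, div_sub_one (ne_of_gt hd), div_mul_div_comm, div_pow, ← sq]; congr 1; ring
    have hsqrt : Real.sqrt (Real.exp (φ v) * (Real.exp (φ v) - 1))
        = v * (v - 1) / (2 * v - 1) := by
      rw [hsq, Real.sqrt_sq (div_nonneg (by nlinarith) hd.le)]
    show Real.exp (φ v) + Real.sqrt (Real.exp (φ v) * (Real.exp (φ v) - 1)) = v
    rw [hsqrt, hr, ← add_div, div_eq_iff (ne_of_gt hd)]; ring
  -- φ is a left inverse of g on (0, ∞)
  have hφg : ∀ w : ℝ, 0 < w → φ (g w) = w := by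
    intro w hw
    have hr1 : 1 < Real.exp w := Real.one_lt_exp_iff.2 hw
    set r := Real.exp w with hrdef
    have hsq : Real.sqrt (r * (r - 1)) ^ 2 = r * (r - 1) :=
      Real.sq_sqrt (by nlinarith [Real.sqrt_nonneg (r * (r - 1))])
    have hgw : g w = r + Real.sqrt (r * (r - 1)) := rfl
    have hv1 : 1 < g w := by
      rw [hgw]; nlinarith [Real.sqrt_nonneg (r * (r - 1))]
    have hkey : (g w) ^ 2 = r * (2 * g w - 1) := by
      rw [hgw]; nlinarith [hsq]
    have hd : (0:ℝ) < 2 * g w - 1 := by linarith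
    show Real.log ((g w) ^ 2 / (2 * g w - 1)) = w
    rw [hkey, mul_div_assoc, div_self (ne_of_gt hd), mul_one, hrdef, Real.log_exp]
  -- φ v > 0 for v > 1
  have hφpos : ∀ v : ℝ, 1 < v → 0 < φ v := by
    intro v hv
    have hd : (0:ℝ) < 2 * v - 1 := by linarith
    apply Real.log_pos
    rw [lt_div_iff₀ hd]; nlinarith
  -- measurability of g
  have hgm : Measurable g := by
    apply Measurable.add Real.measurable_exp
    exact (Real.measurable_exp.mul (Real.measurable_exp.sub measurable_const)).sqrt
  set A : Set ℝ := {w | 0 < w ∧ g w ∈ s} with hA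
  have hAm : MeasurableSet A := measurableSet_Ioi.inter (hgm hs)
  -- the event equals W ⁻¹' A
  have hev : {ω | 1 < RR ω ∧ V ω ∈ s} = W ⁻¹' A := by
    ext ω
    simp only [hRR, hV, mem_setOf_eq, mem_preimage, hA, hg, Real.one_lt_exp_iff]
  -- A = φ '' s
  have hAimg : A = φ '' s := by
    ext w
    constructor
    · rintro ⟨hw0, hws⟩
      exact ⟨g w, hws, hφg w hw0⟩
    · rintro ⟨v, hv, rfl⟩
      exact ⟨hφpos v (hs1 hv), by rw [hgφ v (hs1 hv)]; exact hv⟩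
  -- derivative of φ on s
  have hderiv : ∀ v ∈ s, HasDerivWithinAt φ (1 / v - 1 / (v * (2 * v - 1))) s v := by
    intro v hv
    have hv1 : 1 < v := hs1 hv
    have hd : (0:ℝ) < 2 * v - 1 := by linarith
    have hv0 : (0:ℝ) < v := by linarith
    have h1 : HasDerivAt (fun v : ℝ => v ^ 2 / (2 * v - 1))
        ((2 * v ^ 1 * (2 * v - 1) - v ^ 2 * 2) / (2 * v - 1) ^ 2) v := by
      have hc : HasDerivAt (fun v : ℝ => v ^ 2) (2 * v ^ 1) v := by
        simpa using hasDerivAt_pow 2 v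
      have hdd : HasDerivAt (fun v : ℝ => 2 * v - 1) 2 v := by
        simpa using ((hasDerivAt_id v).const_mul 2).sub_const 1
      exact hc.div hdd (ne_of_gt hd)
    have h2 : HasDerivAt φ
        (((2 * v ^ 1 * (2 * v - 1) - v ^ 2 * 2) / (2 * v - 1) ^ 2) / (v ^ 2 / (2 * v - 1))) v :=
      h1.log (by positivity)
    have h3 : ((2 * v ^ 1 * (2 * v - 1) - v ^ 2 * 2) / (2 * v - 1) ^ 2) / (v ^ 2 / (2 * v - 1))
        = 1 / v - 1 / (v * (2 * v - 1)) := by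
      field_simp; ring
    rw [h3] at h2
    exact h2.hasDerivWithinAt
  -- injectivity of φ on s
  have hinj : InjOn φ s := by
    intro v hv v' hv' h
    calc v = g (φ v) := (hgφ v (hs1 hv)).symm
    _ = g (φ v') := by rw [h]
    _ = v' := hgφ v' (hs1 hv')
  -- integrability
  have hInt : IntegrableOn (gammaPDFReal α (1/θ)) A := by
    constructor
    · exact (measurable_gammaPDFReal α (1/θ)).aestronglyMeasurable.restrict
    · rw [hasFiniteIntegral_iff_ofReal (ae_of_all _ (gammaPDFReal_nonneg hα hβVpos))]
      calc ∫⁻ x in A, ENNReal.ofReal (gammaPDFReal α (1/θ) x)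
          ≤ ∫⁻ x, ENNReal.ofReal (gammaPDFReal α (1/θ) x) := setLIntegral_le_lintegral _ _
        _ = 1 := lintegral_gammaPDF_eq_one hα hβVpos
        _ < ⊤ := ENNReal.one_lt_top
  -- main computation
  rw [hev]
  calc P (W ⁻¹' A) = P.map W A := (Measure.map_apply hWm hAm).symm
    _ = gammaMeasure α (1/θ) A := by rw [hW]
    _ = ∫⁻ x in A, gammaPDF α (1/θ) x := by rw [gammaMeasure, withDensity_apply _ hAm]
    _ = ∫⁻ x in A, ENNReal.ofReal (gammaPDFReal α (1/θ) x) := rfl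
    _ = ENNReal.ofReal (∫ x in A, gammaPDFReal α (1/θ) x) :=
        (ofReal_integral_eq_lintegral_ofReal hInt
          (ae_of_all _ (gammaPDFReal_nonneg hα hβVpos))).symm
    _ = ENNReal.ofReal (∫ v in s,
          |1 / v - 1 / (v * (2 * v - 1))| • gammaPDFReal α (1/θ) (φ v)) := by
        rw [hAimg, integral_image_eq_integral_abs_deriv_smul hs hderiv hinj]
    _ = ENNReal.ofReal (∫ v in s,
            ((1/θ) ^ α / Real.Gamma α)
              * Real.exp (-(1/θ) * Real.log (v ^ 2 / (2 * v - 1)))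
              * (Real.log (v ^ 2 / (2 * v - 1))) ^ (α - 1)
              * (1 / v - 1 / (v * (2 * v - 1)))) := by
        congr 1
        apply setIntegral_congr_fun hs
        intro v hv
        have hv1 : 1 < v := hs1 hv
        have hv0 : (0:ℝ) < v := by linarith
        have hd : (0:ℝ) < 2 * v - 1 := by linarith
        have hnn : 0 ≤ 1 / v - 1 / (v * (2 * v - 1)) := by
          rw [sub_nonneg]
          apply one_div_le_one_div_of_le hv0
          nlinarith
        have hφnn : 0 ≤ φ v := (hφpos v hv1).le
        simp only [smul_eq_mul, abs_of_nonneg hnn, gammaPDFReal, if_pos hφnn]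
        rw [neg_mul, hφ]
        ring
end

section
/- Let Ψ and Ψ̃ be symmetric positive definite 2×2 real matrices with Ψ̃ − Ψ positive semidefinite, let V be symmetric positive definite, and for t in an interval where Ψ + tV and Ψ̃ + tV are positive definite define g(t) = −(ν/2)·log det(Ψ + tV) + ((ν+m)/2)·log det(Ψ̃ + tV). Writing λ₁, λ₂ for the eigenvalues of Ψ^{−1/2} V Ψ^{−1/2} and η₁, η₂ for those of Ψ̃^{−1/2} V Ψ̃^{−1/2}, we have g''(t) = (ν/2)·[Σᵢ (t+λᵢ⁻¹)⁻² − Σᵢ (t+ηᵢ⁻¹)⁻²] − (m/2)·Σᵢ (t+ηᵢ⁻¹)⁻². -/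
open Matrix Finset

/-- The positive semidefinite square root of a positive semidefinite matrix
(the definition of `Matrix.PosSemidef.sqrt` in the older Mathlib, since removed). -/
noncomputable def Matrix.PosSemidef.sqrt {n : Type*} [Fintype n] [DecidableEq n]
    {A : Matrix n n ℝ} (hA : A.PosSemidef) : Matrix n n ℝ :=
  hA.1.eigenvectorUnitary.1 * diagonal (Real.sqrt ∘ hA.1.eigenvalues) *
    (star hA.1.eigenvectorUnitary : Matrix n n ℝ)

variable {n : Type*} [Fintype n] [DecidableEq n]

lemma Matrix.PosSemidef.sqrt_mul_self {A : Matrix n n ℝ} (hA : A.PosSemidef) :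
    hA.sqrt * hA.sqrt = A := by
  unfold Matrix.PosSemidef.sqrt
  have hU' : star (hA.1.eigenvectorUnitary : Matrix n n ℝ) * (hA.1.eigenvectorUnitary : Matrix n n ℝ) = 1 :=
    Matrix.mem_unitaryGroup_iff'.mp hA.1.eigenvectorUnitary.2
  have hspec := hA.1.spectral_theorem
  rw [Unitary.conjStarAlgAut_apply] at hspec
  have hd : diagonal (Real.sqrt ∘ hA.1.eigenvalues) * diagonal (Real.sqrt ∘ hA.1.eigenvalues)
      = diagonal (RCLike.ofReal ∘ hA.1.eigenvalues) := by
    rw [diagonal_mul_diagonal]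
    congr 1
    funext i
    simp [Real.mul_self_sqrt (hA.eigenvalues_nonneg i)]
  calc _ = (hA.1.eigenvectorUnitary : Matrix n n ℝ) * (diagonal (Real.sqrt ∘ hA.1.eigenvalues)
        * (star (hA.1.eigenvectorUnitary : Matrix n n ℝ) * (hA.1.eigenvectorUnitary : Matrix n n ℝ))
        * diagonal (Real.sqrt ∘ hA.1.eigenvalues)) * star (hA.1.eigenvectorUnitary : Matrix n n ℝ) := by
        simp only [Matrix.mul_assoc]
    _ = A := by rw [hU', Matrix.mul_one, hd, hspec.symm]

lemma Matrix.PosSemidef.posSemidef_sqrt {A : Matrix n n ℝ} (hA : A.PosSemidef) :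
    hA.sqrt.PosSemidef :=
  (PosSemidef.diagonal (fun i => Real.sqrt_nonneg _)).mul_mul_conjTranspose_same _

lemma conj_posDef {V B : Matrix n n ℝ} (hV : V.PosDef) (hB : IsUnit B)
    (hBh : B.IsHermitian) : (B * V * B).PosDef := by
  refine Matrix.PosDef.of_dotProduct_mulVec_pos ?_ (fun x hx => ?_)
  · have : (B * V * B)ᴴ = Bᴴ * Vᴴ * Bᴴ := by
      simp [conjTranspose_mul, mul_assoc]
    rw [Matrix.IsHermitian, this, hBh.eq, hV.isHermitian.eq]
  · have hy : B *ᵥ x ≠ 0 := by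
      intro h
      exact hx (Matrix.mulVec_injective_iff_isUnit.mpr hB (by simpa [Matrix.mulVec_zero] using h))
    have h1 : (B * V * B) *ᵥ x = B *ᵥ (V *ᵥ (B *ᵥ x)) := by
      simp [← Matrix.mulVec_mulVec, Matrix.mul_assoc]
    rw [h1, Matrix.dotProduct_mulVec (star x) B,
      show star x ᵥ* B = star (B *ᵥ x) by rw [Matrix.star_mulVec, hBh.eq]]
    exact hV.dotProduct_mulVec_pos hy

lemma sqrt_det_ne_zero {P : Matrix n n ℝ} (hP : P.PosDef) :
    (hP.posSemidef.sqrt).det ≠ 0 := by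
  have h : (hP.posSemidef.sqrt).det * (hP.posSemidef.sqrt).det = P.det := by
    rw [← Matrix.det_mul, hP.posSemidef.sqrt_mul_self]
  intro h0
  rw [h0, mul_zero] at h
  exact hP.det_pos.ne (h)

lemma A_posDef {P V : Matrix n n ℝ} (hP : P.PosDef) (hV : V.PosDef) :
    ((hP.posSemidef.sqrt)⁻¹ * V * (hP.posSemidef.sqrt)⁻¹).PosDef := by
  set S := hP.posSemidef.sqrt with hS
  have hdS : S.det ≠ 0 := sqrt_det_ne_zero hP
  have hinv : IsUnit S⁻¹ := by
    rw [Matrix.isUnit_nonsing_inv_iff]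
    exact (Matrix.isUnit_iff_isUnit_det S).mpr hdS.isUnit
  have hherm : (S⁻¹).IsHermitian := hP.posSemidef.posSemidef_sqrt.1.inv
  exact conj_posDef hV hinv hherm

lemma eig_pos {P V : Matrix n n ℝ} (hP : P.PosDef) (hV : V.PosDef)
    (hA : ((hP.posSemidef.sqrt)⁻¹ * V * (hP.posSemidef.sqrt)⁻¹).IsHermitian) (i : n) :
    0 < hA.eigenvalues i :=
  (A_posDef hP hV).eigenvalues_pos i

lemma det_one_add_smul {A : Matrix n n ℝ} (hA : A.IsHermitian) (s : ℝ) :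
    (1 + s • A).det = ∏ i, (1 + s * hA.eigenvalues i) := by
  have hU : (hA.eigenvectorUnitary : Matrix n n ℝ) * star (hA.eigenvectorUnitary : Matrix n n ℝ) = 1 :=
    Matrix.mem_unitaryGroup_iff.mp hA.eigenvectorUnitary.2
  have hspec := hA.spectral_theorem
  rw [Unitary.conjStarAlgAut_apply] at hspec
  have key : 1 + s • A
      = (hA.eigenvectorUnitary : Matrix n n ℝ) * (1 + s • Matrix.diagonal (RCLike.ofReal ∘ hA.eigenvalues)) * star (hA.eigenvectorUnitary : Matrix n n ℝ) := by
    rw [Matrix.mul_add, Matrix.add_mul, mul_one, Matrix.mul_smul, Matrix.smul_mul, hU, ← hspec]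
  have hU' : star (hA.eigenvectorUnitary : Matrix n n ℝ) * (hA.eigenvectorUnitary : Matrix n n ℝ) = 1 :=
    Matrix.mem_unitaryGroup_iff'.mp hA.eigenvectorUnitary.2
  rw [key, Matrix.det_mul, Matrix.det_mul, mul_comm, ← mul_assoc, ← Matrix.det_mul, hU', Matrix.det_one, one_mul]
  have : (1 : Matrix n n ℝ) + s • Matrix.diagonal (RCLike.ofReal ∘ hA.eigenvalues)
      = Matrix.diagonal (fun i => 1 + s * hA.eigenvalues i) := by
    ext i j
    by_cases h : i = j <;> simp [Matrix.diagonal, h, Matrix.one_apply]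
  rw [this, Matrix.det_diagonal]

lemma det_line {P V : Matrix n n ℝ} (hP : P.PosDef)
    (hA : ((hP.posSemidef.sqrt)⁻¹ * V * (hP.posSemidef.sqrt)⁻¹).IsHermitian) (s : ℝ) :
    (P + s • V).det = P.det * ∏ i, (1 + s * hA.eigenvalues i) := by
  set S := hP.posSemidef.sqrt with hSdef
  have hSS : S * S = P := hP.posSemidef.sqrt_mul_self
  have hdS : S.det ≠ 0 := sqrt_det_ne_zero hP
  have h1 : S * S⁻¹ = 1 := Matrix.mul_nonsing_inv S hdS.isUnit
  have h2 : S⁻¹ * S = 1 := Matrix.nonsing_inv_mul S hdS.isUnit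
  have hfac : P + s • V = S * (1 + s • (S⁻¹ * V * S⁻¹)) * S := by
    rw [Matrix.mul_add, Matrix.add_mul, mul_one, Matrix.mul_smul, Matrix.smul_mul, hSS]
    congr 1
    congr 1
    symm
    calc S * (S⁻¹ * V * S⁻¹) * S = S * S⁻¹ * (V * (S⁻¹ * S)) := by
          simp only [Matrix.mul_assoc]
      _ = V := by rw [h1, h2, one_mul, mul_one]
  rw [hfac, Matrix.det_mul, Matrix.det_mul, det_one_add_smul hA s,
    mul_comm (S.det) _, mul_assoc, ← Matrix.det_mul, hSS]
  exact mul_comm _ _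

lemma posSemidef_smul' {M : Matrix n n ℝ} (hM : M.PosSemidef) {c : ℝ} (hc : 0 ≤ c) :
    (c • M).PosSemidef := by
  refine ⟨?_, fun x => ?_⟩
  · rw [Matrix.IsHermitian, Matrix.conjTranspose_smul, hM.1.eq]
    simp
  · exact (hM.smul hc).2 x

lemma posDef_smul' {M : Matrix n n ℝ} (hM : M.PosDef) {c : ℝ} (hc : 0 < c) :
    (c • M).PosDef := by
  refine ⟨?_, fun x hx => ?_⟩
  · rw [Matrix.IsHermitian, Matrix.conjTranspose_smul, hM.1.eq]
    simp
  · exact (hM.smul hc).2 hx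

lemma factor_pos {P V : Matrix n n ℝ} (hP : P.PosDef) (hV : V.PosDef)
    (hA : ((hP.posSemidef.sqrt)⁻¹ * V * (hP.posSemidef.sqrt)⁻¹).IsHermitian)
    {t : ℝ} (hPt : (P + t • V).PosDef) (i : n) :
    0 < 1 + t * hA.eigenvalues i := by
  set lam := hA.eigenvalues i with hlamdef
  have hl : 0 < lam := eig_pos hP hV hA i
  by_contra hcon
  push_neg at hcon
  -- 1 + t * lam ≤ 0, so t ≤ -lam⁻¹ < 0
  have ht0 : t ≤ -lam⁻¹ := by
    rw [show -lam⁻¹ = -1/lam by field_simp, le_div_iff₀ hl]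
    linarith
  have hs0 : -lam⁻¹ < 0 := neg_neg_iff_pos.mpr (inv_pos.mpr hl)
  have htneg : t < 0 := lt_of_le_of_lt ht0 hs0
  set θ : ℝ := (-lam⁻¹) / t with hθdef
  have hθpos : 0 < θ := div_pos_of_neg_of_neg hs0 htneg
  have hθle : θ ≤ 1 := by
    rw [hθdef, div_le_one_of_neg htneg]
    exact ht0
  have hkey : P + (-lam⁻¹) • V = (1 - θ) • P + θ • (P + t • V) := by
    have hθt : θ * t = -lam⁻¹ := div_mul_cancel₀ _ htneg.ne
    rw [smul_add, smul_smul, hθt, sub_smul, one_smul]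
    abel
  have hposdef : (P + (-lam⁻¹) • V).PosDef := by
    rw [hkey]
    exact Matrix.PosDef.posSemidef_add (posSemidef_smul' hP.posSemidef (by linarith))
      (posDef_smul' hPt hθpos)
  have hdet := det_line hP hA (-lam⁻¹)
  have hzero : (1 + (-lam⁻¹) * lam) = 0 := by
    rw [neg_mul, inv_mul_cancel₀ hl.ne', add_neg_cancel]
  have : (P + (-lam⁻¹) • V).det = 0 := by
    rw [hdet, Finset.prod_eq_zero (Finset.mem_univ i) hzero, mul_zero]
  exact hposdef.det_pos.ne' this

open Filter in
lemma analytic_part (ν : ℝ) (m : ℕ) (g : ℝ → ℝ) (t : ℝ) (lam eta : Fin 2 → ℝ)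
    (dP dQ : ℝ) (hdP : 0 < dP) (hdQ : 0 < dQ)
    (hlpos : ∀ i, 0 < lam i) (hepos : ∀ i, 0 < eta i)
    (hl1 : ∀ i, 0 < 1 + t * lam i) (he1 : ∀ i, 0 < 1 + t * eta i)
    (hgf : g = fun s => -(ν / 2) * Real.log (dP * ∏ i, (1 + s * lam i))
      + ((ν + m) / 2) * Real.log (dQ * ∏ i, (1 + s * eta i))) :
    deriv (deriv g) t
      = ν / 2 * ((∑ i, (t + (lam i)⁻¹)⁻¹ ^ 2) - ∑ i, (t + (eta i)⁻¹)⁻¹ ^ 2)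
        - (m : ℝ) / 2 * ∑ i, (t + (eta i)⁻¹)⁻¹ ^ 2 := by
  set h : ℝ → ℝ := fun s => -(ν / 2) * (Real.log dP + ∑ i, Real.log (1 + s * lam i))
      + ((ν + m) / 2) * (Real.log dQ + ∑ i, Real.log (1 + s * eta i)) with hh
  set φ : ℝ → ℝ := fun s => -(ν / 2) * (∑ i, lam i / (1 + s * lam i))
      + ((ν + m) / 2) * (∑ i, eta i / (1 + s * eta i)) with hφ
  -- eventual positivity of all factors near t
  have hev : ∀ᶠ s in nhds t, (∀ i, 0 < 1 + s * lam i) ∧ (∀ i, 0 < 1 + s * eta i) := by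
    have H1 : ∀ i : Fin 2, ∀ᶠ s in nhds t, 0 < 1 + s * lam i := fun i =>
      (((continuous_const.add (continuous_id.mul continuous_const)).tendsto t).eventually
        (eventually_gt_nhds (hl1 i)))
    have H2 : ∀ i : Fin 2, ∀ᶠ s in nhds t, 0 < 1 + s * eta i := fun i =>
      (((continuous_const.add (continuous_id.mul continuous_const)).tendsto t).eventually
        (eventually_gt_nhds (he1 i)))
    exact (Filter.eventually_all.mpr H1).and (Filter.eventually_all.mpr H2)
  -- g agrees with h near t
  have hgh : g =ᶠ[nhds t] h := by
    filter_upwards [hev] with s hs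
    rw [hgf, hh]
    simp only
    rw [Real.log_mul hdP.ne' (Finset.prod_ne_zero_iff.mpr fun i _ => (hs.1 i).ne'),
      Real.log_mul hdQ.ne' (Finset.prod_ne_zero_iff.mpr fun i _ => (hs.2 i).ne'),
      Real.log_prod fun i _ => (hs.1 i).ne',
      Real.log_prod fun i _ => (hs.2 i).ne']
  -- derivative of h on the good set
  have hhd : ∀ s : ℝ, (∀ i, 0 < 1 + s * lam i) → (∀ i, 0 < 1 + s * eta i) →
      HasDerivAt h (φ s) s := by
    intro s hs1 hs2
    have d1 : ∀ i : Fin 2, HasDerivAt (fun u => Real.log (1 + u * lam i))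
        (lam i / (1 + s * lam i)) s := fun i => by
      simpa using (((hasDerivAt_id s).mul_const (lam i)).const_add 1).log (hs1 i).ne'
    have d2 : ∀ i : Fin 2, HasDerivAt (fun u => Real.log (1 + u * eta i))
        (eta i / (1 + s * eta i)) s := fun i => by
      simpa using (((hasDerivAt_id s).mul_const (eta i)).const_add 1).log (hs2 i).ne'
    have s1 : HasDerivAt (fun u => ∑ i, Real.log (1 + u * lam i))
        (∑ i, lam i / (1 + s * lam i)) s := HasDerivAt.fun_sum fun i _ => d1 i
    have s2 : HasDerivAt (fun u => ∑ i, Real.log (1 + u * eta i))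
        (∑ i, eta i / (1 + s * eta i)) s := HasDerivAt.fun_sum fun i _ => d2 i
    exact ((s1.const_add (Real.log dP)).const_mul _).add
      ((s2.const_add (Real.log dQ)).const_mul _)
  have hdh : deriv h =ᶠ[nhds t] φ := by
    filter_upwards [hev] with s hs
    exact (hhd s hs.1 hs.2).deriv
  have hgφ : deriv g =ᶠ[nhds t] φ := hgh.deriv.trans hdh
  have hmain : deriv (deriv g) t = deriv φ t := hgφ.deriv_eq
  -- second derivative of the model
  have d1 : ∀ i : Fin 2, HasDerivAt (fun u => lam i / (1 + u * lam i))
      (-(lam i * lam i) / (1 + t * lam i) ^ 2) t := fun i => by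
    have := (hasDerivAt_const t (lam i)).fun_div
      (((hasDerivAt_id t).mul_const (lam i)).const_add 1) (hl1 i).ne'
    simpa using this
  have d2 : ∀ i : Fin 2, HasDerivAt (fun u => eta i / (1 + u * eta i))
      (-(eta i * eta i) / (1 + t * eta i) ^ 2) t := fun i => by
    have := (hasDerivAt_const t (eta i)).fun_div
      (((hasDerivAt_id t).mul_const (eta i)).const_add 1) (he1 i).ne'
    simpa using this
  have hφd : HasDerivAt φ
      (-(ν / 2) * (∑ i, -(lam i * lam i) / (1 + t * lam i) ^ 2)
        + ((ν + m) / 2) * (∑ i, -(eta i * eta i) / (1 + t * eta i) ^ 2)) t :=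
    ((HasDerivAt.fun_sum fun i _ => d1 i).const_mul _).add
      ((HasDerivAt.fun_sum fun i _ => d2 i).const_mul _)
  rw [hmain, hφd.deriv]
  -- final algebra
  have e1 : ∀ i : Fin 2, -(lam i * lam i) / (1 + t * lam i) ^ 2
      = -((t + (lam i)⁻¹)⁻¹ ^ 2) := by
    intro i
    have ha := (hlpos i).ne'
    have hb := (hl1 i).ne'
    have hx : t + (lam i)⁻¹ = (1 + t * lam i) / lam i := by
      field_simp
      ring
    rw [hx, inv_div, div_pow]
    ring
  have e2 : ∀ i : Fin 2, -(eta i * eta i) / (1 + t * eta i) ^ 2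
      = -((t + (eta i)⁻¹)⁻¹ ^ 2) := by
    intro i
    have ha := (hepos i).ne'
    have hb := (he1 i).ne'
    have hx : t + (eta i)⁻¹ = (1 + t * eta i) / eta i := by
      field_simp
      ring
    rw [hx, inv_div, div_pow]
    ring
  simp only [e1, e2, Finset.sum_neg_distrib]
  ring

set_option maxHeartbeats 1000000 in
/-- Second derivative of `g(t) = −(ν/2)·log det(Ψ + tV) + ((ν+m)/2)·log det(Ψ̃ + tV)`
for symmetric positive definite 2×2 matrices `Ψ, Ψ̃, V` with `Ψ̃ − Ψ` positive
semidefinite: writing `λᵢ` for the eigenvalues of `Ψ^{−1/2} V Ψ^{−1/2}` and `ηᵢ` for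
those of `Ψ̃^{−1/2} V Ψ̃^{−1/2}`,
`g''(t) = (ν/2)·[Σᵢ (t+λᵢ⁻¹)⁻² − Σᵢ (t+ηᵢ⁻¹)⁻²] − (m/2)·Σᵢ (t+ηᵢ⁻¹)⁻²`. -/
theorem second_deriv_log_det_line (ν : ℝ) (hν : 0 < ν) (m : ℕ)
    (Ψ Ψt V : Matrix (Fin 2) (Fin 2) ℝ)
    (hΨ : Ψ.PosDef) (hΨt : Ψt.PosDef) (hV : V.PosDef)
    (hle : (Ψt - Ψ).PosSemidef)
    (hlam : ((hΨ.posSemidef.sqrt)⁻¹ * V * (hΨ.posSemidef.sqrt)⁻¹).IsHermitian)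
    (heta : ((hΨt.posSemidef.sqrt)⁻¹ * V * (hΨt.posSemidef.sqrt)⁻¹).IsHermitian)
    (g : ℝ → ℝ)
    (hg : g = fun t => -(ν / 2) * Real.log (Ψ + t • V).det
      + ((ν + m) / 2) * Real.log (Ψt + t • V).det)
    (t : ℝ) (ht : (Ψ + t • V).PosDef ∧ (Ψt + t • V).PosDef) :
    deriv (deriv g) t
      = ν / 2 * ((∑ i, (t + (hlam.eigenvalues i)⁻¹)⁻¹ ^ 2)
            - ∑ i, (t + (heta.eigenvalues i)⁻¹)⁻¹ ^ 2)
        - (m : ℝ) / 2 * ∑ i, (t + (heta.eigenvalues i)⁻¹)⁻¹ ^ 2 := by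
  obtain ⟨ht1, ht2⟩ := ht
  refine analytic_part ν m g t hlam.eigenvalues heta.eigenvalues Ψ.det Ψt.det
    hΨ.det_pos hΨt.det_pos (eig_pos hΨ hV hlam) (eig_pos hΨt hV heta)
    (factor_pos hΨ hV hlam ht1) (factor_pos hΨt hV heta ht2) ?_
  rw [hg]
  funext s
  rw [det_line hΨ hlam s, det_line hΨt heta s]
end
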